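/- arXiv:0712.3962 — 6 statements merged into one kernel-verified Lean document; each statement's English description precedes it below -/
import Mathlib

section
/- Let g be a Lie algebra containing elements x_0, x_1, …, x_n, y_0, y_1, …, y_n and scalars t_1, …, t_n satisfying [x_0, y_0] = y_0, [x_0, x_i] = (1 − t_i)x_i, [x_0, y_i] = t_i y_i, [x_i, y_j] = δ_{ij} y_0, [x_i, x_j] = [y_i, y_j] = 0, [y_0, x_j] = [y_0, y_j] = 0 for i, j = 1,…,n. Then the two-tensor r = Σ_{ν=0}^n y_ν ∧ x_ν satisfies the homogeneous classical Yang–Baxter equation [r^{12}, r^{13}] + [r^{12}, r^{23}] + [r^{13}, r^{23}] = 0. -/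
open scoped TensorProduct

/-!
Write `B(r, s) = [r¹², s¹³] + [r¹², s²³] + [r¹³, s²³]`, so the CYBE reads `B(r, r) = 0` for the
bilinear map `B`. With `w₀ = y₀ ∧ x₀` and `wᵢ = yᵢ ∧ xᵢ`, `B(r, r)` splits into pairwise terms:
`B(w₀, w₀) = 0` because `x₀, y₀` span a two-dimensional nonabelian algebra, and `B(wᵢ, wⱼ) = 0`
for `i ≠ j` because all brackets between their legs vanish. Let `D(w)` insert `y₀` into the first, second and third slot
of `w` with signs `+, -, +`. The Heisenberg relation `[xᵢ, yᵢ] = y₀` gives `B(wᵢ, wᵢ) = -D(wᵢ)`,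
and the `x₀`-weights `1 - tᵢ` of `xᵢ` and `tᵢ` of `yᵢ` add up to the weight `1` of `y₀`, which
gives `B(w₀, wᵢ) + B(wᵢ, w₀) = D(wᵢ)`.
-/

namespace ClassicalYangBaxter

open TensorProduct

variable {R A : Type*} [CommRing R] [Ring A] [Algebra R A]

attribute [local instance] LieRing.ofAssociativeRing

variable (R) in
def insert₁ (c : A) : A ⊗[R] A →ₗ[R] A ⊗[R] (A ⊗[R] A) :=
  TensorProduct.mk R A (A ⊗[R] A) c

variable (R) in
def insert₂ (c : A) : A ⊗[R] A →ₗ[R] A ⊗[R] (A ⊗[R] A) :=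
  (TensorProduct.mk R A A c).lTensor A

variable (R) in
def insert₃ (c : A) : A ⊗[R] A →ₗ[R] A ⊗[R] (A ⊗[R] A) :=
  ((TensorProduct.mk R A A).flip c).lTensor A

@[simp] lemma insert₁_tmul (c a b : A) : insert₁ R c (a ⊗ₜ b) = c ⊗ₜ (a ⊗ₜ b) := rfl

@[simp] lemma insert₂_tmul (c a b : A) : insert₂ R c (a ⊗ₜ b) = a ⊗ₜ (c ⊗ₜ b) := rfl

@[simp] lemma insert₃_tmul (c a b : A) : insert₃ R c (a ⊗ₜ b) = a ⊗ₜ (b ⊗ₜ c) := rfl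

variable (R A) in
/-- The legs `r¹², r¹³, r²³` are `insert₃ R 1 r`, `insert₂ R 1 r`, `insert₁ R 1 r`, so
`cybForm R A r r` is the left side of the classical Yang–Baxter equation. -/
def cybForm : A ⊗[R] A →ₗ[R] A ⊗[R] A →ₗ[R] A ⊗[R] (A ⊗[R] A) :=
  let ad := (LieAlgebra.ad R (A ⊗[R] (A ⊗[R] A)) : _ →ₗ[R] Module.End R _)
  ad.compl₁₂ (insert₃ R 1) (insert₂ R 1) + ad.compl₁₂ (insert₃ R 1) (insert₁ R 1) +
    ad.compl₁₂ (insert₂ R 1) (insert₁ R 1)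

lemma cybForm_apply (r s : A ⊗[R] A) :
    cybForm R A r s = ⁅insert₃ R 1 r, insert₂ R 1 s⁆ + ⁅insert₃ R 1 r, insert₁ R 1 s⁆ +
      ⁅insert₂ R 1 r, insert₁ R 1 s⁆ :=
  rfl

lemma cybForm_tmul_tmul (a b c d : A) :
    cybForm R A (a ⊗ₜ b) (c ⊗ₜ d) =
      ⁅a, c⁆ ⊗ₜ (b ⊗ₜ d) + a ⊗ₜ (⁅b, c⁆ ⊗ₜ d) + a ⊗ₜ (c ⊗ₜ ⁅b, d⁆) := by
  simp [cybForm_apply, Ring.lie_def, Algebra.TensorProduct.tmul_mul_tmul, sub_tmul, tmul_sub]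

variable (R) in
def wedge (a b : A) : A ⊗[R] A := a ⊗ₜ b - b ⊗ₜ a

lemma cybForm_wedge_wedge (a b c d : A) :
    cybForm R A (wedge R a b) (wedge R c d) =
      ⁅a, c⁆ ⊗ₜ (b ⊗ₜ d) + a ⊗ₜ (⁅b, c⁆ ⊗ₜ d) + a ⊗ₜ (c ⊗ₜ ⁅b, d⁆)
      - (⁅a, d⁆ ⊗ₜ (b ⊗ₜ c) + a ⊗ₜ (⁅b, d⁆ ⊗ₜ c) + a ⊗ₜ (d ⊗ₜ ⁅b, c⁆))
      - (⁅b, c⁆ ⊗ₜ (a ⊗ₜ d) + b ⊗ₜ (⁅a, c⁆ ⊗ₜ d) + b ⊗ₜ (c ⊗ₜ ⁅a, d⁆))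
      + (⁅b, d⁆ ⊗ₜ (a ⊗ₜ c) + b ⊗ₜ (⁅a, d⁆ ⊗ₜ c) + b ⊗ₜ (d ⊗ₜ ⁅a, c⁆)) := by
  simp only [wedge, map_sub, LinearMap.sub_apply, cybForm_tmul_tmul]
  abel

lemma cybForm_wedge_wedge_eq_zero {a b c d : A} (hac : ⁅a, c⁆ = 0) (had : ⁅a, d⁆ = 0)
    (hbc : ⁅b, c⁆ = 0) (hbd : ⁅b, d⁆ = 0) : cybForm R A (wedge R a b) (wedge R c d) = 0 := by
  simp [cybForm_wedge_wedge, hac, had, hbc, hbd]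

lemma cybForm_wedge_self_of_lie_eq_smul {x y : A} (c : R) (h : ⁅x, y⁆ = c • y) :
    cybForm R A (wedge R y x) (wedge R y x) = 0 := by
  have h' : ⁅y, x⁆ = -(c • y) := by rw [← lie_skew, h]
  rw [cybForm_wedge_wedge]
  simp only [h, h', lie_self, zero_tmul, tmul_zero, neg_tmul, tmul_neg, ← smul_tmul', tmul_smul]
  abel

lemma cybForm_wedge_self_of_lie_eq {x y z : A} (h : ⁅x, y⁆ = z) :
    cybForm R A (wedge R y x) (wedge R y x) =
      -(insert₁ R z (wedge R y x) - insert₂ R z (wedge R y x) + insert₃ R z (wedge R y x)) := by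
  have h' : ⁅y, x⁆ = -z := by rw [← lie_skew, h]
  rw [cybForm_wedge_wedge]
  simp only [h, h', lie_self, zero_tmul, tmul_zero, neg_tmul, tmul_neg, wedge, map_sub,
    insert₁_tmul, insert₂_tmul, insert₃_tmul]
  abel

lemma cybForm_wedge_add_cybForm_wedge {x₀ y₀ x y : A} (t : R)
    (hx : ⁅x₀, x⁆ = (1 - t) • x) (hy : ⁅x₀, y⁆ = t • y) (hy₀x : ⁅y₀, x⁆ = 0)
    (hy₀y : ⁅y₀, y⁆ = 0) :
    cybForm R A (wedge R y₀ x₀) (wedge R y x) + cybForm R A (wedge R y x) (wedge R y₀ x₀) =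
      insert₁ R y₀ (wedge R y x) - insert₂ R y₀ (wedge R y x) + insert₃ R y₀ (wedge R y x) := by
  have hx' : ⁅x, x₀⁆ = -((1 - t) • x) := by rw [← lie_skew, hx]
  have hy' : ⁅y, x₀⁆ = -(t • y) := by rw [← lie_skew, hy]
  have hxy₀ : ⁅x, y₀⁆ = 0 := by rw [← lie_skew, hy₀x, neg_zero]
  have hyy₀ : ⁅y, y₀⁆ = 0 := by rw [← lie_skew, hy₀y, neg_zero]
  rw [cybForm_wedge_wedge, cybForm_wedge_wedge]
  simp only [hx, hy, hx', hy', hy₀x, hy₀y, hxy₀, hyy₀, zero_tmul, tmul_zero, neg_tmul, tmul_neg,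
    ← smul_tmul', tmul_smul, sub_smul, one_smul, sub_tmul, tmul_sub, wedge, map_sub,
    insert₁_tmul, insert₂_tmul, insert₃_tmul]
  abel

lemma cybForm_jordanian_eq_zero {n : ℕ} {x₀ y₀ : A} {x y : Fin n → A} (t : Fin n → R)
    (h₀₀ : ⁅x₀, y₀⁆ = y₀)
    (h₀x : ∀ i, ⁅x₀, x i⁆ = (1 - t i) • x i)
    (h₀y : ∀ i, ⁅x₀, y i⁆ = t i • y i)
    (hxy : ∀ i j, ⁅x i, y j⁆ = if i = j then y₀ else 0)
    (hxx : ∀ i j, ⁅x i, x j⁆ = 0)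
    (hyy : ∀ i j, ⁅y i, y j⁆ = 0)
    (hy₀x : ∀ j, ⁅y₀, x j⁆ = 0)
    (hy₀y : ∀ j, ⁅y₀, y j⁆ = 0) :
    cybForm R A (wedge R y₀ x₀ + ∑ i, wedge R (y i) (x i))
      (wedge R y₀ x₀ + ∑ i, wedge R (y i) (x i)) = 0 := by
  set B := cybForm R A
  set w₀ := wedge R y₀ x₀
  set w := fun i => wedge R (y i) (x i)
  set D := fun i => insert₁ R y₀ (w i) - insert₂ R y₀ (w i) + insert₃ R y₀ (w i)
  have hJordan : B w₀ w₀ = 0 := cybForm_wedge_self_of_lie_eq_smul 1 (by rw [one_smul, h₀₀])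
  have hcross : ∀ i, B w₀ (w i) + B (w i) w₀ = D i := fun i =>
    cybForm_wedge_add_cybForm_wedge (t i) (h₀x i) (h₀y i) (hy₀x i) (hy₀y i)
  have hdiag : ∀ i, B (w i) (w i) = -D i := fun i =>
    cybForm_wedge_self_of_lie_eq (by rw [hxy, if_pos rfl])
  have hoff : ∀ i j, i ≠ j → B (w i) (w j) = 0 := fun i j hij =>
    cybForm_wedge_wedge_eq_zero (hyy i j) (by rw [← lie_skew, hxy, if_neg hij.symm, neg_zero])
      (by rw [hxy, if_neg hij]) (hxx i j)
  clear_value B w₀ w D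
  calc B (w₀ + ∑ i, w i) (w₀ + ∑ i, w i)
      = B w₀ w₀ + ∑ i, (B w₀ (w i) + B (w i) w₀) + ∑ j, ∑ i, B (w i) (w j) := by
        simp only [map_add, map_sum, LinearMap.add_apply, LinearMap.sum_apply,
          Finset.sum_add_distrib]
        abel
    _ = ∑ i, (D i + -D i) := by
        simp only [hJordan, hcross, zero_add, Finset.sum_add_distrib, ← hdiag]
        congr 1
        exact Finset.sum_congr rfl fun j _ =>
          Finset.sum_eq_single_of_mem j (Finset.mem_univ j) fun i _ hij => hoff i j hij
    _ = 0 := by simp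

lemma cybForm_jordanian_map_eq_zero {L : Type*} [LieRing L] [LieAlgebra R L] (f : L →ₗ⁅R⁆ A)
    {n : ℕ} {x₀ y₀ : L} {x y : Fin n → L} (t : Fin n → R)
    (h₀₀ : ⁅x₀, y₀⁆ = y₀)
    (h₀x : ∀ i, ⁅x₀, x i⁆ = (1 - t i) • x i)
    (h₀y : ∀ i, ⁅x₀, y i⁆ = t i • y i)
    (hxy : ∀ i j, ⁅x i, y j⁆ = if i = j then y₀ else 0)
    (hxx : ∀ i j, ⁅x i, x j⁆ = 0)
    (hyy : ∀ i j, ⁅y i, y j⁆ = 0)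
    (hy₀x : ∀ j, ⁅y₀, x j⁆ = 0)
    (hy₀y : ∀ j, ⁅y₀, y j⁆ = 0) :
    cybForm R A (wedge R (f y₀) (f x₀) + ∑ i, wedge R (f (y i)) (f (x i)))
      (wedge R (f y₀) (f x₀) + ∑ i, wedge R (f (y i)) (f (x i))) = 0 :=
  cybForm_jordanian_eq_zero t (by rw [← f.map_lie, h₀₀])
    (fun i => by rw [← f.map_lie, h₀x, map_smul]) (fun i => by rw [← f.map_lie, h₀y, map_smul])
    (fun i j => by rw [← f.map_lie, hxy, apply_ite f, map_zero])
    (fun i j => by rw [← f.map_lie, hxx, map_zero]) (fun i j => by rw [← f.map_lie, hyy, map_zero])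
    (fun j => by rw [← f.map_lie, hy₀x, map_zero]) (fun j => by rw [← f.map_lie, hy₀y, map_zero])

end ClassicalYangBaxter

/-- An r-matrix of Jordanian type satisfies the homogeneous CYBE. -/
theorem jordanian_r_matrix_cybe {R L : Type*} [CommRing R] [LieRing L] [LieAlgebra R L]
    (n : ℕ) (x0 y0 : L) (x y : Fin n → L) (t : Fin n → R)
    (h00 : ⁅x0, y0⁆ = y0)
    (h0x : ∀ i, ⁅x0, x i⁆ = (1 - t i) • x i)
    (h0y : ∀ i, ⁅x0, y i⁆ = t i • y i)
    (hxy : ∀ i j, ⁅x i, y j⁆ = if i = j then y0 else 0)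
    (hxx : ∀ i j, ⁅x i, x j⁆ = 0)
    (hyy : ∀ i j, ⁅y i, y j⁆ = 0)
    (hy0x : ∀ j, ⁅y0, x j⁆ = 0)
    (hy0y : ∀ j, ⁅y0, y j⁆ = 0) :
    let A := UniversalEnvelopingAlgebra R L
    let ι : L → A := fun v => UniversalEnvelopingAlgebra.ι R v
    -- r = Σ_{ν=0}^{n} y_ν ∧ x_ν, with y ∧ x := y ⊗ x − x ⊗ y, embedded in U(g)^{⊗3}
    let r12 : A ⊗[R] (A ⊗[R] A) :=
      (ι y0 ⊗ₜ[R] (ι x0 ⊗ₜ[R] (1 : A)) - ι x0 ⊗ₜ[R] (ι y0 ⊗ₜ[R] (1 : A))) +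
      ∑ i, (ι (y i) ⊗ₜ[R] (ι (x i) ⊗ₜ[R] (1 : A)) - ι (x i) ⊗ₜ[R] (ι (y i) ⊗ₜ[R] (1 : A)))
    let r13 : A ⊗[R] (A ⊗[R] A) :=
      (ι y0 ⊗ₜ[R] ((1 : A) ⊗ₜ[R] ι x0) - ι x0 ⊗ₜ[R] ((1 : A) ⊗ₜ[R] ι y0)) +
      ∑ i, (ι (y i) ⊗ₜ[R] ((1 : A) ⊗ₜ[R] ι (x i)) - ι (x i) ⊗ₜ[R] ((1 : A) ⊗ₜ[R] ι (y i)))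
    let r23 : A ⊗[R] (A ⊗[R] A) :=
      ((1 : A) ⊗ₜ[R] (ι y0 ⊗ₜ[R] ι x0) - (1 : A) ⊗ₜ[R] (ι x0 ⊗ₜ[R] ι y0)) +
      ∑ i, ((1 : A) ⊗ₜ[R] (ι (y i) ⊗ₜ[R] ι (x i)) - (1 : A) ⊗ₜ[R] (ι (x i) ⊗ₜ[R] ι (y i)))
    ⁅r12, r13⁆ + ⁅r12, r23⁆ + ⁅r13, r23⁆ = 0 := by
  intro A ι r12 r13 r23
  have key := ClassicalYangBaxter.cybForm_jordanian_map_eq_zero (UniversalEnvelopingAlgebra.ι R)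
    t h00 h0x h0y hxy hxx hyy hy0x hy0y
  rw [ClassicalYangBaxter.cybForm_apply] at key
  simp only [ClassicalYangBaxter.wedge, map_add, map_sub, map_sum,
    ClassicalYangBaxter.insert₁_tmul, ClassicalYangBaxter.insert₂_tmul,
    ClassicalYangBaxter.insert₃_tmul] at key
  exact key
end

section
/- With h, e satisfying [h, e] = e, the Jordanian twist admits the binomial expansion exp(2h ⊗ σ) = (1 ⊗ 1 + 1 ⊗ ξe)^{h ⊗ 1} = Σ_{k≥0} (ξ^k/k!) · h(h−1)⋯(h−k+1) ⊗ e^k, where σ = ½ log(1 + ξ e). -/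
open scoped TensorProduct

/-- Exponential of a formal power series (with zero constant term) over a `ℚ`-algebra. -/
noncomputable def expPS {A : Type*} [Ring A] [Algebra ℚ A] (X : PowerSeries A) :
    PowerSeries A :=
  PowerSeries.mk fun m =>
    ∑ n ∈ Finset.range (m + 1), ((n.factorial : ℚ)⁻¹) • (PowerSeries.coeff m) (X ^ n)

/-- The falling factorial `a(a−1)⋯(a−k+1)` of an element of a ring. -/
noncomputable def fallFac {A : Type*} [Ring A] (a : A) (k : ℕ) : A :=
  ((List.range k).map (fun j : ℕ => a - (j : A))).prod

/-!
In `A ⊗ A` the elements `h ⊗ 1` and `1 ⊗ e` commute, so the identity takes place in a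
commutative `ℚ`-algebra, where `F = exp (a log (1 + b X))` satisfies `(1 + b X) F' = a b F`,
`F(0) = 1`. Comparing coefficients gives `(m + 1) f_{m+1} = (a - m) b f_m`, whose solution is
`f_m = a(a-1)⋯(a-m+1) b^m / m!`.
-/

open PowerSeries

section FallingFactorial

variable {A : Type*} [Ring A]

lemma fallFac_zero (a : A) : fallFac a 0 = 1 := by
  simp [fallFac]

lemma fallFac_succ (a : A) (k : ℕ) : fallFac a (k + 1) = fallFac a k * (a - k) := by
  simp [fallFac, List.range_succ]

lemma map_fallFac {B F : Type*} [Ring B] [FunLike F A B] [RingHomClass F A B] (f : F) (a : A)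
    (k : ℕ) : f (fallFac a k) = fallFac (f a) k := by
  induction k with
  | zero => simp [fallFac_zero]
  | succ k ih => rw [fallFac_succ, map_mul, ih, map_sub, map_natCast, fallFac_succ]

end FallingFactorial

lemma coeff_pow_eq_zero_of_lt {R : Type*} [Semiring R] {F : PowerSeries R}
    (hF : constantCoeff F = 0) {m n : ℕ} (hmn : m < n) : coeff m (F ^ n) = 0 :=
  coeff_of_lt_order _ <|
    (Nat.cast_lt.mpr hmn).trans_le (le_order_pow_of_constantCoeff_eq_zero n hF)

section Series

variable {A : Type*} [Ring A] [Algebra ℚ A]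

/-- `log (1 + a X)`; the `m = 0` coefficient vanishes because `x / 0 = 0` in `ℚ`. -/
noncomputable def logOneAddSeries (a : A) : PowerSeries A :=
  mk fun m => ((-1 : ℚ) ^ (m + 1) / m) • a ^ m

/-- `(1 + b X) ^ a`. -/
noncomputable def oneAddPowSeries (a b : A) : PowerSeries A :=
  mk fun m => (m.factorial : ℚ)⁻¹ • (fallFac a m * b ^ m)

lemma constantCoeff_logOneAddSeries (a : A) : constantCoeff (logOneAddSeries a) = 0 := by
  simp [logOneAddSeries, ← coeff_zero_eq_constantCoeff_apply]

lemma coeff_expPS_eq_coeff_sum {F : PowerSeries A} (hF : constantCoeff F = 0) {m M : ℕ}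
    (hmM : m ≤ M) :
    coeff m (expPS F) = coeff m (∑ n ∈ Finset.range (M + 1), (n.factorial : ℚ)⁻¹ • F ^ n) := by
  rw [expPS, coeff_mk, map_sum]
  refine Finset.sum_subset (Finset.range_subset_range.mpr (by omega)) fun n hn hn' => ?_
  rw [Finset.mem_range] at hn hn'
  rw [coeff_pow_eq_zero_of_lt hF (by omega), smul_zero]

variable {B : Type*} [Ring B] [Algebra ℚ B] (f : A →ₐ[ℚ] B)

lemma map_expPS (F : PowerSeries A) :
    map (f : A →+* B) (expPS F) = expPS (map (f : A →+* B) F) := by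
  ext m
  simp [expPS, ← map_pow, map_sum, map_smul]

lemma map_logOneAddSeries (a : A) :
    map (f : A →+* B) (logOneAddSeries a) = logOneAddSeries (f a) := by
  ext m
  simp [logOneAddSeries, map_smul]

lemma map_oneAddPowSeries (a b : A) :
    map (f : A →+* B) (oneAddPowSeries a b) = oneAddPowSeries (f a) (f b) := by
  ext m
  simp [oneAddPowSeries, map_smul, map_fallFac]

end Series

section Commutative

variable {R : Type*} [CommRing R] [Algebra ℚ R]

lemma derivative_sum_range_exp (F : PowerSeries R) (M : ℕ) :
    d⁄dX R (∑ n ∈ Finset.range (M + 2), (n.factorial : ℚ)⁻¹ • F ^ n)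
      = d⁄dX R F * ∑ n ∈ Finset.range (M + 1), (n.factorial : ℚ)⁻¹ • F ^ n := by
  rw [map_sum, Finset.sum_range_succ', Finset.mul_sum]
  simp only [map_rat_smul, Derivation.leibniz_pow, zero_smul, smul_zero, add_zero,
    Nat.add_sub_cancel]
  refine Finset.sum_congr rfl fun n _ => ?_
  have hcoeff : ((n + 1).factorial : ℚ)⁻¹ * (n + 1 : ℕ) = (n.factorial : ℚ)⁻¹ := by
    rw [Nat.factorial_succ]
    push_cast
    field_simp
  rw [← Nat.cast_smul_eq_nsmul ℚ, smul_smul, hcoeff, smul_eq_mul, mul_comm (F ^ n), mul_smul_comm]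

lemma derivative_expPS {F : PowerSeries R} (hF : constantCoeff F = 0) :
    d⁄dX R (expPS F) = d⁄dX R F * expPS F := by
  ext m
  rw [coeff_derivative, coeff_expPS_eq_coeff_sum hF (le_refl (m + 1)), ← coeff_derivative,
    derivative_sum_range_exp, coeff_mul, coeff_mul]
  refine Finset.sum_congr rfl fun p hp => ?_
  rw [coeff_expPS_eq_coeff_sum hF (Finset.HasAntidiagonal.antidiagonal.snd_le hp)]

lemma one_add_mul_derivative_logOneAddSeries (b : R) :
    (1 + C b * X) * d⁄dX R (logOneAddSeries b) = C b := by
  have hderiv : d⁄dX R (logOneAddSeries b) = mk fun m => ((-1 : ℚ) ^ m) • b ^ (m + 1) := by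
    ext m
    rw [coeff_derivative, logOneAddSeries, coeff_mk, coeff_mk, ← Nat.cast_succ, mul_comm,
      ← nsmul_eq_mul, ← Nat.cast_smul_eq_nsmul ℚ, smul_smul]
    congr 1
    field_simp
    ring
  ext m
  rw [hderiv, add_mul, one_mul, mul_assoc, map_add, coeff_C_mul, coeff_C]
  cases m with
  | zero => simp
  | succ k =>
    rw [coeff_succ_X_mul, coeff_mk, coeff_mk, mul_smul_comm, ← pow_succ', pow_succ (-1 : ℚ),
      mul_neg_one, neg_smul, neg_add_cancel, if_neg k.succ_ne_zero]

lemma eq_oneAddPowSeries_of_derivative {a b : R} {F : PowerSeries R} (h0 : constantCoeff F = 1)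
    (hF : (1 + C b * X) * d⁄dX R F = C (a * b) * F) : F = oneAddPowSeries a b := by
  have hrec : ∀ m, ((m + 1 : ℕ) : ℚ) • coeff (m + 1) F = ((a - m) * b) * coeff m F := by
    intro m
    have hm := congrArg (coeff m) hF
    rw [add_mul, one_mul, mul_assoc, map_add, coeff_C_mul, coeff_C_mul, coeff_derivative] at hm
    rw [Nat.cast_smul_eq_nsmul, nsmul_eq_mul, mul_comm]
    cases m with
    | zero => simpa using hm
    | succ k =>
      rw [coeff_succ_X_mul, coeff_derivative] at hm
      push_cast at hm ⊢
      linear_combination hm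
  ext m
  rw [oneAddPowSeries, coeff_mk]
  induction m with
  | zero => simp [fallFac_zero, h0]
  | succ m ih =>
    have hne : ((m + 1 : ℕ) : ℚ) ≠ 0 := by positivity
    rw [← inv_smul_smul₀ hne (coeff (m + 1) F), hrec, ih, mul_smul_comm, smul_smul,
      Nat.factorial_succ, Nat.cast_mul, mul_inv, fallFac_succ]
    congr 1
    ring

theorem expPS_C_mul_logOneAddSeries (a b : R) :
    expPS (C a * logOneAddSeries b) = oneAddPowSeries a b := by
  have h0 : constantCoeff (C a * logOneAddSeries b) = 0 := by
    simp [constantCoeff_logOneAddSeries]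
  apply eq_oneAddPowSeries_of_derivative
  · rw [← coeff_zero_eq_constantCoeff_apply]
    simp [expPS]
  · rw [derivative_expPS h0, Derivation.leibniz, derivative_C, smul_zero, add_zero, smul_eq_mul,
      ← mul_assoc, mul_left_comm, one_add_mul_derivative_logOneAddSeries, ← map_mul]

end Commutative

open scoped IsMulCommutative in
/-- The commutative case transfers along the inclusion of the commutative subalgebra `ℚ[a, b]`. -/
theorem expPS_C_mul_logOneAddSeries_of_commute {A : Type*} [Ring A] [Algebra ℚ A] {a b : A}
    (hab : Commute a b) : expPS (C a * logOneAddSeries b) = oneAddPowSeries a b := by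
  let S := Algebra.adjoin ℚ ({a, b} : Set A)
  have : IsMulCommutative S := Algebra.isMulCommutative_adjoin ℚ <| by
    simp only [Set.mem_insert_iff, Set.mem_singleton_iff]
    rintro x (rfl | rfl) y (rfl | rfl)
    exacts [rfl, hab, hab.symm, rfl]
  let a' : S := ⟨a, Algebra.subset_adjoin (by simp)⟩
  let b' : S := ⟨b, Algebra.subset_adjoin (by simp)⟩
  have h := congrArg (map (S.val : S →+* A)) (expPS_C_mul_logOneAddSeries a' b')
  rwa [map_expPS, map_mul, map_C, map_logOneAddSeries, map_oneAddPowSeries] at h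

theorem jordanian_twist_binomial_general {A : Type*} [Ring A] [Algebra ℚ A]
    (h e : A) :
    let σ : PowerSeries A :=
      PowerSeries.mk fun m => if m = 0 then 0 else (((-1 : ℚ) ^ (m + 1)) / (2 * m)) • e ^ m
    let X : PowerSeries (A ⊗[ℚ] A) :=
      PowerSeries.mk fun m => (2 : ℚ) • (h ⊗ₜ[ℚ] (PowerSeries.coeff m σ))
    -- the binomial series (1⊗1 + 1⊗ξe)^{h⊗1} = Σ_k (ξ^k/k!)(h⊗1)((h⊗1)−1)⋯((h⊗1)−k+1)(1⊗e)^k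
    let binom : PowerSeries (A ⊗[ℚ] A) :=
      PowerSeries.mk fun m =>
        ((m.factorial : ℚ)⁻¹) • (fallFac (h ⊗ₜ[ℚ] (1 : A)) m * ((1 : A) ⊗ₜ[ℚ] (e ^ m)))
    -- Σ_k (ξ^k/k!) h(h−1)⋯(h−k+1) ⊗ e^k
    let rhs : PowerSeries (A ⊗[ℚ] A) :=
      PowerSeries.mk fun m => ((m.factorial : ℚ)⁻¹) • (fallFac h m ⊗ₜ[ℚ] (e ^ m))
    expPS X = binom ∧ binom = rhs := by
  intro σ X binom rhs
  have hX : X = C (h ⊗ₜ[ℚ] (1 : A)) * logOneAddSeries ((1 : A) ⊗ₜ[ℚ] e) := by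
    ext m
    simp only [X, σ, logOneAddSeries, coeff_mk, coeff_C_mul, Algebra.TensorProduct.tmul_pow,
      one_pow, mul_smul_comm, Algebra.TensorProduct.tmul_mul_tmul, mul_one, one_mul]
    split_ifs with hm
    · simp [hm]
    · rw [TensorProduct.tmul_smul, smul_smul]
      congr 1
      field_simp
  have hbinom : binom = oneAddPowSeries (h ⊗ₜ[ℚ] (1 : A)) ((1 : A) ⊗ₜ[ℚ] e) := by
    ext m
    simp [binom, oneAddPowSeries]
  have hfallFac (m : ℕ) : fallFac (h ⊗ₜ[ℚ] (1 : A)) m = fallFac h m ⊗ₜ[ℚ] (1 : A) :=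
    (map_fallFac (Algebra.TensorProduct.includeLeft : A →ₐ[ℚ] A ⊗[ℚ] A) h m).symm
  refine ⟨?_, ?_⟩
  · rw [hX, hbinom]
    exact expPS_C_mul_logOneAddSeries_of_commute ((Commute.one_right h).tmul (Commute.one_left e))
  · ext m
    simp [binom, rhs, hfallFac]

/-- the binomial expansion of the Jordanian twist:
`exp(2h ⊗ σ) = (1⊗1 + 1⊗ξe)^{h⊗1} = Σ_k (ξ^k/k!) h(h−1)⋯(h−k+1) ⊗ e^k`. -/
theorem jordanian_twist_binomial {A : Type*} [Ring A] [Algebra ℚ A]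
    (h e : A) (hhe : h * e - e * h = e) :
    let σ : PowerSeries A :=
      PowerSeries.mk fun m => if m = 0 then 0 else (((-1 : ℚ) ^ (m + 1)) / (2 * m)) • e ^ m
    let X : PowerSeries (A ⊗[ℚ] A) :=
      PowerSeries.mk fun m => (2 : ℚ) • (h ⊗ₜ[ℚ] (PowerSeries.coeff m σ))
    -- the binomial series (1⊗1 + 1⊗ξe)^{h⊗1} = Σ_k (ξ^k/k!)(h⊗1)((h⊗1)−1)⋯((h⊗1)−k+1)(1⊗e)^k
    let binom : PowerSeries (A ⊗[ℚ] A) :=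
      PowerSeries.mk fun m =>
        ((m.factorial : ℚ)⁻¹) • (fallFac (h ⊗ₜ[ℚ] (1 : A)) m * ((1 : A) ⊗ₜ[ℚ] (e ^ m)))
    -- Σ_k (ξ^k/k!) h(h−1)⋯(h−k+1) ⊗ e^k
    let rhs : PowerSeries (A ⊗[ℚ] A) :=
      PowerSeries.mk fun m => ((m.factorial : ℚ)⁻¹) • (fallFac h m ⊗ₜ[ℚ] (e ^ m))
    expPS X = binom ∧ binom = rhs :=
  jordanian_twist_binomial_general h e
end

section
/- In the Poincaré algebra P(3,1), the two-tensor r₁ = γ h' ∧ h + α P_+ ∧ P_− + ᾶ P₁ ∧ P₂ satisfies the homogeneous classical Yang–Baxter equation, where P_± = P₀ ± P₃ and h = iN₃, h' = iM₃. -/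
open scoped TensorProduct

/-- The Levi-Civita symbol on three indices. -/
def eps : Fin 3 → Fin 3 → Fin 3 → ℤ
  | 0, 1, 2 => 1
  | 1, 2, 0 => 1
  | 2, 0, 1 => 1
  | 1, 0, 2 => -1
  | 0, 2, 1 => -1
  | 2, 1, 0 => -1
  | _, _, _ => 0

/-!
Write `r₁ = γ h' ∧ h + s` with `s = α P₊ ∧ P₋ + ᾶ P₁ ∧ P₂`. The Yang–Baxter expression is
quadratic in `r₁`: the part coming from `h' ∧ h` alone vanishes because `[h', h] = 0`, the part
coming from `s` alone vanishes because translations commute, and the mixed part is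
`h' ∧ ad_h s - h ∧ ad_h' s` up to sign. Now `ad_h` has weights `±1` on `P_±` and kills `P₁, P₂`,
while `ad_h'` kills `P_±` and rotates `(P₁, P₂)`; both are traceless on the two planes, so `s` is
invariant. The proof expands everything in `U(L)^{⊗3}` and normalises it with the fifteen
commutation relations among `h', h, P_±, P₁, P₂`. Indices are shifted: `P₁, P₂, P₃` are
`Pv 0, Pv 1, Pv 2` and `M₃, N₃` are `M 2, N 2`.
-/

section ClassicalYangBaxter

variable (R : Type*) {A : Type*} [CommRing R] [Ring A] [Algebra R A]

def wedge (u v : A) : A ⊗[R] A := u ⊗ₜ[R] v - v ⊗ₜ[R] u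

def classicalYangBaxter (r : A ⊗[R] A) : A ⊗[R] (A ⊗[R] A) :=
  let E12 : (A ⊗[R] A) →ₐ[R] A ⊗[R] (A ⊗[R] A) :=
    Algebra.TensorProduct.map (AlgHom.id R A) Algebra.TensorProduct.includeLeft
  let E13 : (A ⊗[R] A) →ₐ[R] A ⊗[R] (A ⊗[R] A) :=
    Algebra.TensorProduct.map (AlgHom.id R A) Algebra.TensorProduct.includeRight
  let E23 : (A ⊗[R] A) →ₐ[R] A ⊗[R] (A ⊗[R] A) := Algebra.TensorProduct.includeRight
  ⁅E12 r, E13 r⁆ + ⁅E12 r, E23 r⁆ + ⁅E13 r, E23 r⁆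

variable {R}

theorem mul_eq_mul_sub_of_lie_eq {x y z : A} (h : ⁅x, y⁆ = z) : y * x = x * y - z := by
  rw [← h, Ring.lie_def, sub_sub_cancel]

theorem classicalYangBaxter_eq_zero_of_lie_relations {a b c d e f : A}
    (hab : ⁅a, b⁆ = 0) (hac : ⁅a, c⁆ = 0) (had : ⁅a, d⁆ = 0) (hae : ⁅a, e⁆ = -f)
    (haf : ⁅a, f⁆ = e) (hbc : ⁅b, c⁆ = c) (hbd : ⁅b, d⁆ = -d) (hbe : ⁅b, e⁆ = 0)
    (hbf : ⁅b, f⁆ = 0) (hcd : ⁅c, d⁆ = 0) (hce : ⁅c, e⁆ = 0) (hcf : ⁅c, f⁆ = 0)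
    (hde : ⁅d, e⁆ = 0) (hdf : ⁅d, f⁆ = 0) (hef : ⁅e, f⁆ = 0) (γ α α' : R) :
    classicalYangBaxter R (γ • wedge R a b + α • wedge R c d + α' • wedge R e f) = 0 := by
  simp only [classicalYangBaxter, wedge, map_add, map_smul, map_sub,
    Algebra.TensorProduct.map_tmul, AlgHom.id_apply,
    Algebra.TensorProduct.includeLeft_apply, Algebra.TensorProduct.includeRight_apply,
    Ring.lie_def, smul_sub, smul_add, sub_mul, mul_sub, add_mul, mul_add,
    smul_mul_assoc, mul_smul_comm, Algebra.TensorProduct.tmul_mul_tmul, one_mul, mul_one,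
    mul_eq_mul_sub_of_lie_eq hab, mul_eq_mul_sub_of_lie_eq hac, mul_eq_mul_sub_of_lie_eq had,
    mul_eq_mul_sub_of_lie_eq hae, mul_eq_mul_sub_of_lie_eq haf, mul_eq_mul_sub_of_lie_eq hbc,
    mul_eq_mul_sub_of_lie_eq hbd, mul_eq_mul_sub_of_lie_eq hbe, mul_eq_mul_sub_of_lie_eq hbf,
    mul_eq_mul_sub_of_lie_eq hcd, mul_eq_mul_sub_of_lie_eq hce, mul_eq_mul_sub_of_lie_eq hcf,
    mul_eq_mul_sub_of_lie_eq hde, mul_eq_mul_sub_of_lie_eq hdf, mul_eq_mul_sub_of_lie_eq hef,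
    sub_zero, sub_neg_eq_add]
  simp only [TensorProduct.sub_tmul, TensorProduct.tmul_sub, TensorProduct.add_tmul,
    TensorProduct.tmul_add]
  module

end ClassicalYangBaxter

section LieAlgebra

variable {R L : Type*} [CommRing R] [LieRing L] [LieAlgebra R L]

theorem UniversalEnvelopingAlgebra.ι_lie (x y : L) : ι R ⁅x, y⁆ = ⁅ι R x, ι R y⁆ :=
  letI := LieRing.ofAssociativeRing (A := UniversalEnvelopingAlgebra R L)
  (ι R).map_lie x y

theorem lie_eq_zero_of_mem_span {s : Set L} (hs : ∀ x ∈ s, ∀ y ∈ s, ⁅x, y⁆ = 0) {x y : L}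
    (hx : x ∈ Submodule.span R s) (hy : y ∈ Submodule.span R s) : ⁅x, y⁆ = 0 := by
  induction hx, hy using Submodule.span_induction₂ with
  | mem_mem x y hx hy => exact hs x hx y hy
  | zero_left => exact zero_lie _
  | zero_right => exact lie_zero _
  | add_left _ _ _ _ _ _ h₁ h₂ => rw [add_lie, h₁, h₂, add_zero]
  | add_right _ _ _ _ _ _ h₁ h₂ => rw [lie_add, h₁, h₂, add_zero]
  | smul_left _ _ _ _ _ h => rw [smul_lie, h, smul_zero]
  | smul_right _ _ _ _ _ h => rw [lie_smul, h, smul_zero]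

end LieAlgebra

theorem lie_translations_eq_zero {L ι : Type*} [LieRing L] {Pv : ι → L} {P0 : L}
    (hPP : ∀ i j, ⁅Pv i, Pv j⁆ = 0) (hP0P : ∀ i, ⁅P0, Pv i⁆ = 0) :
    ∀ x ∈ insert P0 (Set.range Pv), ∀ y ∈ insert P0 (Set.range Pv), ⁅x, y⁆ = 0 := by
  rintro _ (rfl | ⟨i, rfl⟩) _ (rfl | ⟨j, rfl⟩)
  · exact lie_self _
  · exact hP0P j
  · rw [← lie_skew, hP0P, neg_zero]
  · exact hPP i j

section Poincare

open Complex

variable {L : Type*} [LieRing L] [LieAlgebra ℂ L] {M N Pv : Fin 3 → L} {P0 : L}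

theorem lie_rot_boost (hMN : ∀ i j, ⁅M i, N j⁆ = I • ∑ k, (eps i j k : ℂ) • N k) :
    ⁅I • M 2, I • N 2⁆ = 0 := by
  simp [hMN, eps]

theorem lie_rot_Pv_zero (hMP : ∀ i j, ⁅M i, Pv j⁆ = I • ∑ k, (eps i j k : ℂ) • Pv k) :
    ⁅I • M 2, Pv 0⁆ = -Pv 1 := by
  simp [hMP, Fin.sum_univ_three, eps, smul_smul]

theorem lie_rot_Pv_one (hMP : ∀ i j, ⁅M i, Pv j⁆ = I • ∑ k, (eps i j k : ℂ) • Pv k) :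
    ⁅I • M 2, Pv 1⁆ = Pv 0 := by
  simp [hMP, Fin.sum_univ_three, eps, smul_smul]

theorem lie_rot_P0_add_Pv_two (hMP : ∀ i j, ⁅M i, Pv j⁆ = I • ∑ k, (eps i j k : ℂ) • Pv k)
    (hMP0 : ∀ i, ⁅M i, P0⁆ = 0) : ⁅I • M 2, P0 + Pv 2⁆ = 0 := by
  simp [hMP, hMP0, eps]

theorem lie_rot_P0_sub_Pv_two (hMP : ∀ i j, ⁅M i, Pv j⁆ = I • ∑ k, (eps i j k : ℂ) • Pv k)
    (hMP0 : ∀ i, ⁅M i, P0⁆ = 0) : ⁅I • M 2, P0 - Pv 2⁆ = 0 := by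
  simp [hMP, hMP0, eps]

theorem lie_boost_Pv_of_ne (hNP : ∀ i j, ⁅N i, Pv j⁆ = if i = j then -(I • P0) else 0)
    {j : Fin 3} (hj : j ≠ 2) : ⁅I • N 2, Pv j⁆ = 0 := by
  simp [hNP, hj.symm]

theorem lie_boost_P0_add_Pv_two (hNP : ∀ i j, ⁅N i, Pv j⁆ = if i = j then -(I • P0) else 0)
    (hNP0 : ∀ i, ⁅N i, P0⁆ = -(I • Pv i)) : ⁅I • N 2, P0 + Pv 2⁆ = P0 + Pv 2 := by
  simp [hNP, hNP0, smul_smul, add_comm]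

theorem lie_boost_P0_sub_Pv_two (hNP : ∀ i j, ⁅N i, Pv j⁆ = if i = j then -(I • P0) else 0)
    (hNP0 : ∀ i, ⁅N i, P0⁆ = -(I • Pv i)) : ⁅I • N 2, P0 - Pv 2⁆ = -(P0 - Pv 2) := by
  simp [hNP, hNP0, smul_smul]

end Poincare

theorem poincare_r1_cybe_general {L : Type*} [LieRing L] [LieAlgebra ℂ L]
    (M N Pv : Fin 3 → L) (P0 : L)
    (hMN : ∀ i j, ⁅M i, N j⁆ = Complex.I • ∑ k, (eps i j k : ℂ) • N k)
    (hMP : ∀ i j, ⁅M i, Pv j⁆ = Complex.I • ∑ k, (eps i j k : ℂ) • Pv k)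
    (hMP0 : ∀ i, ⁅M i, P0⁆ = 0)
    (hNP : ∀ i j, ⁅N i, Pv j⁆ = if i = j then -(Complex.I • P0) else 0)
    (hNP0 : ∀ i, ⁅N i, P0⁆ = -(Complex.I • Pv i))
    (hPP : ∀ i j, ⁅Pv i, Pv j⁆ = 0)
    (hP0P : ∀ i, ⁅P0, Pv i⁆ = 0)
    (γ α α' : ℂ) :
    let h : L := Complex.I • N 2
    let h' : L := Complex.I • M 2
    let Pp : L := P0 + Pv 2
    let Pm : L := P0 - Pv 2
    let A := UniversalEnvelopingAlgebra ℂ L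
    let ι : L → A := fun v => UniversalEnvelopingAlgebra.ι ℂ v
    -- wedge: u ∧ v = u ⊗ v − v ⊗ u
    let w : L → L → A ⊗[ℂ] A := fun u v => ι u ⊗ₜ[ℂ] ι v - ι v ⊗ₜ[ℂ] ι u
    let r : A ⊗[ℂ] A := γ • w h' h + α • w Pp Pm + α' • w (Pv 0) (Pv 1)
    let E12 : (A ⊗[ℂ] A) →ₐ[ℂ] A ⊗[ℂ] (A ⊗[ℂ] A) :=
      Algebra.TensorProduct.map (AlgHom.id ℂ A) Algebra.TensorProduct.includeLeft
    let E13 : (A ⊗[ℂ] A) →ₐ[ℂ] A ⊗[ℂ] (A ⊗[ℂ] A) :=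
      Algebra.TensorProduct.map (AlgHom.id ℂ A) Algebra.TensorProduct.includeRight
    let E23 : (A ⊗[ℂ] A) →ₐ[ℂ] A ⊗[ℂ] (A ⊗[ℂ] A) := Algebra.TensorProduct.includeRight
    ⁅E12 r, E13 r⁆ + ⁅E12 r, E23 r⁆ + ⁅E13 r, E23 r⁆ = 0 := by
  intro h h' Pp Pm A ι w r E12 E13 E23
  have hι {x y z : L} (hxy : ⁅x, y⁆ = z) : ⁅ι x, ι y⁆ = ι z :=
    hxy ▸ (UniversalEnvelopingAlgebra.ι_lie x y).symm
  have hι₀ {x y : L} (hxy : ⁅x, y⁆ = 0) : ⁅ι x, ι y⁆ = 0 := (hι hxy).trans (map_zero _)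
  have hι_neg {x y z : L} (hxy : ⁅x, y⁆ = -z) : ⁅ι x, ι y⁆ = -ι z :=
    (hι hxy).trans (map_neg _ z)
  let T := Submodule.span ℂ (insert P0 (Set.range Pv))
  have hT {x y : L} (hx : x ∈ T) (hy : y ∈ T) : ⁅ι x, ι y⁆ = 0 :=
    hι₀ (lie_eq_zero_of_mem_span (lie_translations_eq_zero hPP hP0P) hx hy)
  have hP0 : P0 ∈ T := Submodule.subset_span (Set.mem_insert _ _)
  have hPv (i : Fin 3) : Pv i ∈ T := Submodule.subset_span (Set.mem_insert_of_mem _ ⟨i, rfl⟩)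
  exact classicalYangBaxter_eq_zero_of_lie_relations
    (hι₀ (lie_rot_boost hMN)) (hι₀ (lie_rot_P0_add_Pv_two hMP hMP0))
    (hι₀ (lie_rot_P0_sub_Pv_two hMP hMP0)) (hι_neg (lie_rot_Pv_zero hMP))
    (hι (lie_rot_Pv_one hMP)) (hι (lie_boost_P0_add_Pv_two hNP hNP0))
    (hι_neg (lie_boost_P0_sub_Pv_two hNP hNP0)) (hι₀ (lie_boost_Pv_of_ne hNP (by decide)))
    (hι₀ (lie_boost_Pv_of_ne hNP (by decide))) (hT (add_mem hP0 (hPv 2)) (sub_mem hP0 (hPv 2)))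
    (hT (add_mem hP0 (hPv 2)) (hPv 0)) (hT (add_mem hP0 (hPv 2)) (hPv 1))
    (hT (sub_mem hP0 (hPv 2)) (hPv 0)) (hT (sub_mem hP0 (hPv 2)) (hPv 1)) (hT (hPv 0) (hPv 1))
    γ α α'

/-- in the Poincaré algebra, the r-matrix
`r₁ = γ h' ∧ h + α P₊ ∧ P₋ + ᾶ P₁ ∧ P₂` (with `P_± = P₀ ± P₃`, `h = iN₃`, `h' = iM₃`)
satisfies the homogeneous classical Yang–Baxter equation. -/
theorem poincare_r1_cybe {L : Type*} [LieRing L] [LieAlgebra ℂ L]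
    (M N Pv : Fin 3 → L) (P0 : L)
    (hMM : ∀ i j, ⁅M i, M j⁆ = Complex.I • ∑ k, (eps i j k : ℂ) • M k)
    (hMN : ∀ i j, ⁅M i, N j⁆ = Complex.I • ∑ k, (eps i j k : ℂ) • N k)
    (hNN : ∀ i j, ⁅N i, N j⁆ = -(Complex.I • ∑ k, (eps i j k : ℂ) • M k))
    (hMP : ∀ i j, ⁅M i, Pv j⁆ = Complex.I • ∑ k, (eps i j k : ℂ) • Pv k)
    (hMP0 : ∀ i, ⁅M i, P0⁆ = 0)
    (hNP : ∀ i j, ⁅N i, Pv j⁆ = if i = j then -(Complex.I • P0) else 0)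
    (hNP0 : ∀ i, ⁅N i, P0⁆ = -(Complex.I • Pv i))
    (hPP : ∀ i j, ⁅Pv i, Pv j⁆ = 0)
    (hP0P : ∀ i, ⁅P0, Pv i⁆ = 0)
    (γ α α' : ℂ) :
    let h : L := Complex.I • N 2
    let h' : L := Complex.I • M 2
    let Pp : L := P0 + Pv 2
    let Pm : L := P0 - Pv 2
    let A := UniversalEnvelopingAlgebra ℂ L
    let ι : L → A := fun v => UniversalEnvelopingAlgebra.ι ℂ v
    -- wedge: u ∧ v = u ⊗ v − v ⊗ u
    let w : L → L → A ⊗[ℂ] A := fun u v => ι u ⊗ₜ[ℂ] ι v - ι v ⊗ₜ[ℂ] ι u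
    let r : A ⊗[ℂ] A := γ • w h' h + α • w Pp Pm + α' • w (Pv 0) (Pv 1)
    let E12 : (A ⊗[ℂ] A) →ₐ[ℂ] A ⊗[ℂ] (A ⊗[ℂ] A) :=
      Algebra.TensorProduct.map (AlgHom.id ℂ A) Algebra.TensorProduct.includeLeft
    let E13 : (A ⊗[ℂ] A) →ₐ[ℂ] A ⊗[ℂ] (A ⊗[ℂ] A) :=
      Algebra.TensorProduct.map (AlgHom.id ℂ A) Algebra.TensorProduct.includeRight
    let E23 : (A ⊗[ℂ] A) →ₐ[ℂ] A ⊗[ℂ] (A ⊗[ℂ] A) := Algebra.TensorProduct.includeRight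
    ⁅E12 r, E13 r⁆ + ⁅E12 r, E23 r⁆ + ⁅E13 r, E23 r⁆ = 0 :=
  poincare_r1_cybe_general M N Pv P0 hMN hMP hMP0 hNP hNP0 hPP hP0P γ α α'
end

section
/- In the Lorentz algebra o(3,1), the r-matrix r₂ = α(e_+ ∧ h − e'_+ ∧ h') + 2β e'_+ ∧ e_+ satisfies the homogeneous classical Yang–Baxter equation for all scalars α, β. -/
/-!
Only `h, h', e₊, e'₊` occur in `r₂`, and they span a subalgebra of `o(3,1)` in which
`e₊, e'₊` commute and `h, h'` commute. The relations `[h, e₊] = e₊, [h, e'₊] = e'₊,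
[h', e₊] = e'₊, [h', e'₊] = -e₊` normal-order every monomial of the CYBE, after which all terms
cancel. The computation is valid in any associative algebra with four elements having these
commutators, in particular in the universal enveloping algebra.
-/

open scoped TensorProduct

theorem mul_eq_mul_sub_of_lie_eq_s13 {A : Type*} [Ring A] {a b c : A} (hab : ⁅a, b⁆ = c) :
    b * a = a * b - c := by
  rw [← hab, Ring.lie_def]
  abel

namespace YangBaxter

variable {R A : Type*} [CommRing R] [Ring A] [Algebra R A]

variable (R) in
def wedge (a b : A) : A ⊗[R] A := a ⊗ₜ[R] b - b ⊗ₜ[R] a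

def classicalYangBaxter (r : A ⊗[R] A) : A ⊗[R] (A ⊗[R] A) :=
  let E12 : (A ⊗[R] A) →ₐ[R] A ⊗[R] (A ⊗[R] A) :=
    Algebra.TensorProduct.map (AlgHom.id R A) Algebra.TensorProduct.includeLeft
  let E13 : (A ⊗[R] A) →ₐ[R] A ⊗[R] (A ⊗[R] A) :=
    Algebra.TensorProduct.map (AlgHom.id R A) Algebra.TensorProduct.includeRight
  let E23 : (A ⊗[R] A) →ₐ[R] A ⊗[R] (A ⊗[R] A) := Algebra.TensorProduct.includeRight
  ⁅E12 r, E13 r⁆ + ⁅E12 r, E23 r⁆ + ⁅E13 r, E23 r⁆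

theorem classicalYangBaxter_lorentz_r₂ {h h' e e' : A}
    (hhe : ⁅h, e⁆ = e) (hhe' : ⁅h, e'⁆ = e') (hh'e : ⁅h', e⁆ = e') (hh'e' : ⁅h', e'⁆ = -e)
    (hhh' : ⁅h, h'⁆ = 0) (hee' : ⁅e, e'⁆ = 0) (α β : R) :
    classicalYangBaxter (α • (wedge R e h - wedge R e' h') + (2 * β) • wedge R e' e) = 0 := by
  have ord_eh : e * h = h * e - e := mul_eq_mul_sub_of_lie_eq_s13 hhe
  have ord_e'h : e' * h = h * e' - e' := mul_eq_mul_sub_of_lie_eq_s13 hhe'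
  have ord_eh' : e * h' = h' * e - e' := mul_eq_mul_sub_of_lie_eq_s13 hh'e
  have ord_e'h' : e' * h' = h' * e' + e := by rw [mul_eq_mul_sub_of_lie_eq_s13 hh'e', sub_neg_eq_add]
  have ord_e'e : e' * e = e * e' := by rw [mul_eq_mul_sub_of_lie_eq_s13 hee', sub_zero]
  have ord_h'h : h' * h = h * h' := by rw [mul_eq_mul_sub_of_lie_eq_s13 hhh', sub_zero]
  simp only [classicalYangBaxter, wedge, map_add, map_sub, map_smul,
    Algebra.TensorProduct.map_tmul, AlgHom.coe_id, id_eq,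
    Algebra.TensorProduct.includeLeft_apply, Algebra.TensorProduct.includeRight_apply,
    Ring.lie_def, mul_add, add_mul, sub_mul, mul_sub, smul_mul_assoc, mul_smul_comm,
    Algebra.TensorProduct.tmul_mul_tmul, one_mul, mul_one,
    ord_eh, ord_e'h, ord_eh', ord_e'h', ord_e'e, ord_h'h,
    TensorProduct.tmul_add, TensorProduct.add_tmul, TensorProduct.tmul_sub,
    TensorProduct.sub_tmul]
  module

end YangBaxter

theorem UniversalEnvelopingAlgebra.ι_lie_s13 {R L : Type*} [CommRing R] [LieRing L] [LieAlgebra R L]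
    (a b : L) : ι R ⁅a, b⁆ = ⁅ι R a, ι R b⁆ :=
  letI := LieRing.ofAssociativeRing (A := UniversalEnvelopingAlgebra R L)
  (ι R).map_lie a b

open YangBaxter in
theorem lorentz_r2_cybe_general {L : Type*} [LieRing L] [LieAlgebra ℂ L]
    (h ep h' ep' : L)
    (hhep : ⁅h, ep⁆ = ep) (hhep' : ⁅h, ep'⁆ = ep')
    (hh'ep : ⁅h', ep⁆ = ep') (hh'ep' : ⁅h', ep'⁆ = -ep)
    (hhh' : ⁅h, h'⁆ = 0) (hepep' : ⁅ep, ep'⁆ = 0)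
    (α β : ℂ) :
    let A := UniversalEnvelopingAlgebra ℂ L
    let ι : L → A := fun v => UniversalEnvelopingAlgebra.ι ℂ v
    let w : L → L → A ⊗[ℂ] A := fun a b => ι a ⊗ₜ[ℂ] ι b - ι b ⊗ₜ[ℂ] ι a
    let r : A ⊗[ℂ] A := α • (w ep h - w ep' h') + (2 * β) • w ep' ep
    let E12 : (A ⊗[ℂ] A) →ₐ[ℂ] A ⊗[ℂ] (A ⊗[ℂ] A) :=
      Algebra.TensorProduct.map (AlgHom.id ℂ A) Algebra.TensorProduct.includeLeft
    let E13 : (A ⊗[ℂ] A) →ₐ[ℂ] A ⊗[ℂ] (A ⊗[ℂ] A) :=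
      Algebra.TensorProduct.map (AlgHom.id ℂ A) Algebra.TensorProduct.includeRight
    let E23 : (A ⊗[ℂ] A) →ₐ[ℂ] A ⊗[ℂ] (A ⊗[ℂ] A) := Algebra.TensorProduct.includeRight
    ⁅E12 r, E13 r⁆ + ⁅E12 r, E23 r⁆ + ⁅E13 r, E23 r⁆ = 0 := by
  intro A ι w r E12 E13 E23
  have lie_ι {a b c : L} (hab : ⁅a, b⁆ = c) : ⁅ι a, ι b⁆ = UniversalEnvelopingAlgebra.ι ℂ c :=
    hab ▸ (UniversalEnvelopingAlgebra.ι_lie_s13 a b).symm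
  exact classicalYangBaxter_lorentz_r₂ (lie_ι hhep) (lie_ι hhep') (lie_ι hh'ep)
    ((lie_ι hh'ep').trans (map_neg _ _)) ((lie_ι hhh').trans (map_zero _))
    ((lie_ι hepep').trans (map_zero _)) α β

/-- in the Lorentz algebra `o(3,1)`, the r-matrix
`r₂ = α(e₊ ∧ h − e'₊ ∧ h') + 2β e'₊ ∧ e₊` satisfies the homogeneous CYBE. -/
theorem lorentz_r2_cybe {L : Type*} [LieRing L] [LieAlgebra ℂ L]
    (h ep em h' ep' em' : L)
    (hhep : ⁅h, ep⁆ = ep) (hhem : ⁅h, em⁆ = -em) (hepem : ⁅ep, em⁆ = (2 : ℂ) • h)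
    (hhep' : ⁅h, ep'⁆ = ep') (hhem' : ⁅h, em'⁆ = -em')
    (hh'ep : ⁅h', ep⁆ = ep') (hh'em : ⁅h', em⁆ = -em')
    (hepem' : ⁅ep, em'⁆ = (2 : ℂ) • h') (hemep' : ⁅em, ep'⁆ = -((2 : ℂ) • h'))
    (hh'ep' : ⁅h', ep'⁆ = -ep) (hh'em' : ⁅h', em'⁆ = em)
    (hep'em' : ⁅ep', em'⁆ = -((2 : ℂ) • h))
    (hhh' : ⁅h, h'⁆ = 0) (hepep' : ⁅ep, ep'⁆ = 0) (hemem' : ⁅em, em'⁆ = 0)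
    (α β : ℂ) :
    let A := UniversalEnvelopingAlgebra ℂ L
    let ι : L → A := fun v => UniversalEnvelopingAlgebra.ι ℂ v
    let w : L → L → A ⊗[ℂ] A := fun a b => ι a ⊗ₜ[ℂ] ι b - ι b ⊗ₜ[ℂ] ι a
    let r : A ⊗[ℂ] A := α • (w ep h - w ep' h') + (2 * β) • w ep' ep
    let E12 : (A ⊗[ℂ] A) →ₐ[ℂ] A ⊗[ℂ] (A ⊗[ℂ] A) :=
      Algebra.TensorProduct.map (AlgHom.id ℂ A) Algebra.TensorProduct.includeLeft
    let E13 : (A ⊗[ℂ] A) →ₐ[ℂ] A ⊗[ℂ] (A ⊗[ℂ] A) :=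
      Algebra.TensorProduct.map (AlgHom.id ℂ A) Algebra.TensorProduct.includeRight
    let E23 : (A ⊗[ℂ] A) →ₐ[ℂ] A ⊗[ℂ] (A ⊗[ℂ] A) := Algebra.TensorProduct.includeRight
    ⁅E12 r, E13 r⁆ + ⁅E12 r, E23 r⁆ + ⁅E13 r, E23 r⁆ = 0 :=
  lorentz_r2_cybe_general h ep h' ep' hhep hhep' hh'ep hh'ep' hhh' hepep' α β
end

section
/- In the Poincaré algebra P(3,1), the two-tensor r₁₇ = β₁ P_+ ∧ h + α₁ P₁ ∧ P₂ + α₂ P_+ ∧ P₁ decomposes as r'₁₇ + r''₁₇ with r'₁₇ = P_+ ∧ (β₁ h + α₂ P₁) of Jordanian type (i.e. [h, P_+] = P_+ and [P₁, P_+] = 0) and r''₁₇ = α₁ P₁ ∧ P₂ Abelian, each subordinated to the other: [x ⊗ 1 + 1 ⊗ x, r''₁₇] = 0 for x ∈ {P_+, β₁h + α₂P₁} and [y ⊗ 1 + 1 ⊗ y, r'₁₇] = 0 for y ∈ {P₁, P₂}. Consequently r₁₇ satisfies the homogeneous CYBE. -/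
open scoped TensorProduct

/- Auxiliary lemmas -/

/-- In the UEA, elements whose Lie bracket vanishes commute. -/
lemma uea_comm_of_lie_eq_zero {L : Type*} [LieRing L] [LieAlgebra ℂ L] (x y : L)
    (hxy : ⁅x, y⁆ = 0) :
    (UniversalEnvelopingAlgebra.ι ℂ x) * (UniversalEnvelopingAlgebra.ι ℂ y)
      = (UniversalEnvelopingAlgebra.ι ℂ y) * (UniversalEnvelopingAlgebra.ι ℂ x) := by
  letI : LieRing (UniversalEnvelopingAlgebra ℂ L) := LieRing.ofAssociativeRing
  have h := (UniversalEnvelopingAlgebra.ι ℂ).map_lie x y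
  rw [hxy, map_zero, Ring.lie_def] at h
  exact sub_eq_zero.mp h.symm

lemma uea_mul_expand {L : Type*} [LieRing L] [LieAlgebra ℂ L] (x y : L) :
    (UniversalEnvelopingAlgebra.ι ℂ x) * (UniversalEnvelopingAlgebra.ι ℂ y)
      = (UniversalEnvelopingAlgebra.ι ℂ y) * (UniversalEnvelopingAlgebra.ι ℂ x)
        + UniversalEnvelopingAlgebra.ι ℂ ⁅x, y⁆ := by
  letI : LieRing (UniversalEnvelopingAlgebra ℂ L) := LieRing.ofAssociativeRing
  have h := (UniversalEnvelopingAlgebra.ι ℂ).map_lie x y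
  rw [Ring.lie_def] at h
  rw [h]; abel

/-- Subordination helper: if `x` commutes with `a` and `b` then
`x ⊗ 1 + 1 ⊗ x` commutes with `a ⊗ b - b ⊗ a`. -/
lemma sub2 {A : Type*} [Ring A] [Algebra ℂ A] (x a b : A)
    (hxa : x * a = a * x) (hxb : x * b = b * x) :
    ⁅x ⊗ₜ[ℂ] (1 : A) + (1 : A) ⊗ₜ[ℂ] x, a ⊗ₜ[ℂ] b - b ⊗ₜ[ℂ] a⁆ = 0 := by
  simp only [Ring.lie_def, mul_sub, sub_mul, add_mul, mul_add,
    Algebra.TensorProduct.tmul_mul_tmul, one_mul, mul_one, hxa, hxb]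
  abel

/-- Subordination helper with a scalar. -/
lemma sub2' {A : Type*} [Ring A] [Algebra ℂ A] (x a b : A) (α : ℂ)
    (hxa : x * a = a * x) (hxb : x * b = b * x) :
    ⁅x ⊗ₜ[ℂ] (1 : A) + (1 : A) ⊗ₜ[ℂ] x, α • (a ⊗ₜ[ℂ] b - b ⊗ₜ[ℂ] a)⁆ = 0 := by
  rw [Ring.lie_def, mul_smul_comm, smul_mul_assoc, ← smul_sub, ← Ring.lie_def,
    sub2 x a b hxa hxb, smul_zero]

/-- Abstract CYBE for a Jordanian piece plus a subordinated Abelian piece. -/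
lemma cybe_abs {A : Type*} [Ring A] [Algebra ℂ A] (X Y Z B : A) (c α : ℂ)
    (hYX : Y * X = X * Y) (hZX : Z * X = X * Z) (hZY : Z * Y = Y * Z)
    (hBY : B * Y = Y * B) (hBZ : B * Z = Z * B)
    (hBX : B * X = X * B + c • X)
    (r12 r13 r23 : A ⊗[ℂ] (A ⊗[ℂ] A))
    (h12 : r12 = X ⊗ₜ[ℂ] (B ⊗ₜ[ℂ] 1) - B ⊗ₜ[ℂ] (X ⊗ₜ[ℂ] 1)
        + α • (Y ⊗ₜ[ℂ] (Z ⊗ₜ[ℂ] 1) - Z ⊗ₜ[ℂ] (Y ⊗ₜ[ℂ] 1)))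
    (h13 : r13 = X ⊗ₜ[ℂ] ((1 : A) ⊗ₜ[ℂ] B) - B ⊗ₜ[ℂ] ((1 : A) ⊗ₜ[ℂ] X)
        + α • (Y ⊗ₜ[ℂ] ((1 : A) ⊗ₜ[ℂ] Z) - Z ⊗ₜ[ℂ] ((1 : A) ⊗ₜ[ℂ] Y)))
    (h23 : r23 = (1 : A) ⊗ₜ[ℂ] (X ⊗ₜ[ℂ] B) - (1 : A) ⊗ₜ[ℂ] (B ⊗ₜ[ℂ] X)
        + α • ((1 : A) ⊗ₜ[ℂ] (Y ⊗ₜ[ℂ] Z) - (1 : A) ⊗ₜ[ℂ] (Z ⊗ₜ[ℂ] Y))) :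
    ⁅r12, r13⁆ + ⁅r12, r23⁆ + ⁅r13, r23⁆ = 0 := by
  subst h12 h13 h23
  simp only [Ring.lie_def, mul_sub, sub_mul, add_mul, mul_add,
    smul_mul_assoc, mul_smul_comm, Algebra.TensorProduct.tmul_mul_tmul, one_mul, mul_one,
    hYX, hZX, hZY, hBY, hBZ, hBX,
    TensorProduct.tmul_add, TensorProduct.add_tmul, TensorProduct.tmul_smul,
    ← TensorProduct.smul_tmul']
  module

set_option maxHeartbeats 1000000 in
/-- `r₁₇ = β₁ P₊ ∧ h + α₁ P₁ ∧ P₂ + α₂ P₊ ∧ P₁` decomposes into the Jordanian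
piece `r'₁₇ = P₊ ∧ (β₁h + α₂P₁)` (with `[h,P₊] = P₊`, `[P₁,P₊] = 0`) and the Abelian piece
`r''₁₇ = α₁ P₁ ∧ P₂`, mutually subordinated; consequently `r₁₇` satisfies the homogeneous
CYBE. -/
theorem poincare_r17_cybe {L : Type*} [LieRing L] [LieAlgebra ℂ L]
    (M N Pv : Fin 3 → L) (P0 : L)
    (hMM : ∀ i j, ⁅M i, M j⁆ = Complex.I • ∑ k, (eps i j k : ℂ) • M k)
    (hMN : ∀ i j, ⁅M i, N j⁆ = Complex.I • ∑ k, (eps i j k : ℂ) • N k)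
    (hNN : ∀ i j, ⁅N i, N j⁆ = -(Complex.I • ∑ k, (eps i j k : ℂ) • M k))
    (hMP : ∀ i j, ⁅M i, Pv j⁆ = Complex.I • ∑ k, (eps i j k : ℂ) • Pv k)
    (hMP0 : ∀ i, ⁅M i, P0⁆ = 0)
    (hNP : ∀ i j, ⁅N i, Pv j⁆ = if i = j then -(Complex.I • P0) else 0)
    (hNP0 : ∀ i, ⁅N i, P0⁆ = -(Complex.I • Pv i))
    (hPP : ∀ i j, ⁅Pv i, Pv j⁆ = 0)
    (hP0P : ∀ i, ⁅P0, Pv i⁆ = 0)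
    (β₁ α₁ α₂ : ℂ) :
    let h : L := Complex.I • N 2
    let Pp : L := P0 + Pv 2
    let A := UniversalEnvelopingAlgebra ℂ L
    let ι : L → A := fun z => UniversalEnvelopingAlgebra.ι ℂ z
    let w : L → L → A ⊗[ℂ] A := fun a b => ι a ⊗ₜ[ℂ] ι b - ι b ⊗ₜ[ℂ] ι a
    let r17' : A ⊗[ℂ] A := w Pp (β₁ • h + α₂ • Pv 0)
    let r17'' : A ⊗[ℂ] A := α₁ • w (Pv 0) (Pv 1)
    let r : A ⊗[ℂ] A := r17' + r17''
    let E12 : (A ⊗[ℂ] A) →ₐ[ℂ] A ⊗[ℂ] (A ⊗[ℂ] A) :=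
      Algebra.TensorProduct.map (AlgHom.id ℂ A) Algebra.TensorProduct.includeLeft
    let E13 : (A ⊗[ℂ] A) →ₐ[ℂ] A ⊗[ℂ] (A ⊗[ℂ] A) :=
      Algebra.TensorProduct.map (AlgHom.id ℂ A) Algebra.TensorProduct.includeRight
    let E23 : (A ⊗[ℂ] A) →ₐ[ℂ] A ⊗[ℂ] (A ⊗[ℂ] A) := Algebra.TensorProduct.includeRight
    -- the Jordanian-type structure of r'₁₇
    (⁅h, Pp⁆ = Pp ∧ ⁅Pv 0, Pp⁆ = 0) ∧
    -- mutual subordination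
    (∀ x ∈ ({Pp, β₁ • h + α₂ • Pv 0} : Set L),
        ⁅ι x ⊗ₜ[ℂ] (1 : A) + (1 : A) ⊗ₜ[ℂ] ι x, r17''⁆ = 0) ∧
    (∀ y ∈ ({Pv 0, Pv 1} : Set L),
        ⁅ι y ⊗ₜ[ℂ] (1 : A) + (1 : A) ⊗ₜ[ℂ] ι y, r17'⁆ = 0) ∧
    -- r₁₇ satisfies the homogeneous CYBE
    ⁅E12 r, E13 r⁆ + ⁅E12 r, E23 r⁆ + ⁅E13 r, E23 r⁆ = 0 := by
  intro h Pp A ι w r17' r17'' r E12 E13 E23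
  -- basic Lie brackets
  have hhPp : ⁅h, Pp⁆ = Pp := by
    have e1 : ⁅h, P0⁆ = Pv 2 := by
      rw [show (⁅h, P0⁆ : L) = Complex.I • ⁅N 2, P0⁆ from smul_lie _ _ _, hNP0 2,
        smul_neg, smul_smul, Complex.I_mul_I, neg_smul, one_smul, neg_neg]
    have e2 : ⁅h, Pv 2⁆ = P0 := by
      rw [show (⁅h, Pv 2⁆ : L) = Complex.I • ⁅N 2, Pv 2⁆ from smul_lie _ _ _, hNP 2 2,
        if_pos rfl, smul_neg, smul_smul, Complex.I_mul_I, neg_smul, one_smul, neg_neg]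
    show ⁅h, P0 + Pv 2⁆ = P0 + Pv 2
    rw [lie_add, e1, e2, add_comm]
  have hhP0 : ⁅h, Pv 0⁆ = 0 := by
    rw [show (⁅h, Pv 0⁆ : L) = Complex.I • ⁅N 2, Pv 0⁆ from smul_lie _ _ _,
      hNP 2 0, if_neg (by decide), smul_zero]
  have hhP1 : ⁅h, Pv 1⁆ = 0 := by
    rw [show (⁅h, Pv 1⁆ : L) = Complex.I • ⁅N 2, Pv 1⁆ from smul_lie _ _ _,
      hNP 2 1, if_neg (by decide), smul_zero]
  have hP0Pp : ⁅Pv 0, Pp⁆ = 0 := by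
    show ⁅Pv 0, P0 + Pv 2⁆ = 0
    rw [lie_add, hPP 0 2, ← lie_skew (Pv 0) P0, hP0P, neg_zero, add_zero]
  have hP1Pp : ⁅Pv 1, Pp⁆ = 0 := by
    show ⁅Pv 1, P0 + Pv 2⁆ = 0
    rw [lie_add, hPP 1 2, ← lie_skew (Pv 1) P0, hP0P, neg_zero, add_zero]
  have hBPp : ⁅β₁ • h + α₂ • Pv 0, Pp⁆ = β₁ • Pp := by
    rw [add_lie, smul_lie α₂ (Pv 0) Pp, hP0Pp, smul_zero, add_zero,
      smul_lie β₁ h Pp, hhPp]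
  have hBP0 : ⁅β₁ • h + α₂ • Pv 0, Pv 0⁆ = 0 := by
    rw [add_lie, smul_lie α₂ (Pv 0) (Pv 0), hPP 0 0, smul_zero, add_zero,
      smul_lie β₁ h (Pv 0), hhP0, smul_zero]
  have hBP1 : ⁅β₁ • h + α₂ • Pv 0, Pv 1⁆ = 0 := by
    rw [add_lie, smul_lie α₂ (Pv 0) (Pv 1), hPP 0 1, smul_zero, add_zero,
      smul_lie β₁ h (Pv 1), hhP1, smul_zero]
  -- commutation relations in the UEA
  have hYX : ι (Pv 0) * ι Pp = ι Pp * ι (Pv 0) :=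
    uea_comm_of_lie_eq_zero _ _ hP0Pp
  have hZX : ι (Pv 1) * ι Pp = ι Pp * ι (Pv 1) :=
    uea_comm_of_lie_eq_zero _ _ hP1Pp
  have hZY : ι (Pv 1) * ι (Pv 0) = ι (Pv 0) * ι (Pv 1) :=
    uea_comm_of_lie_eq_zero _ _ (hPP 1 0)
  have hBY : ι (β₁ • h + α₂ • Pv 0) * ι (Pv 0) = ι (Pv 0) * ι (β₁ • h + α₂ • Pv 0) :=
    uea_comm_of_lie_eq_zero _ _ hBP0
  have hBZ : ι (β₁ • h + α₂ • Pv 0) * ι (Pv 1) = ι (Pv 1) * ι (β₁ • h + α₂ • Pv 0) :=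
    uea_comm_of_lie_eq_zero _ _ hBP1
  have hBX : ι (β₁ • h + α₂ • Pv 0) * ι Pp
      = ι Pp * ι (β₁ • h + α₂ • Pv 0) + β₁ • ι Pp := by
    have := uea_mul_expand (β₁ • h + α₂ • Pv 0) Pp
    rw [hBPp, map_smul] at this
    exact this
  have er'' : r17'' = α₁ • (ι (Pv 0) ⊗ₜ[ℂ] ι (Pv 1) - ι (Pv 1) ⊗ₜ[ℂ] ι (Pv 0)) := rfl
  have er' : r17' = ι Pp ⊗ₜ[ℂ] ι (β₁ • h + α₂ • Pv 0)
      - ι (β₁ • h + α₂ • Pv 0) ⊗ₜ[ℂ] ι Pp := rfl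
  refine ⟨⟨hhPp, hP0Pp⟩, ?_, ?_, ?_⟩
  · intro x hx
    rw [Set.mem_insert_iff, Set.mem_singleton_iff] at hx
    rcases hx with rfl | rfl
    · rw [er'', sub2' (ι Pp) (ι (Pv 0)) (ι (Pv 1)) α₁ hYX.symm hZX.symm]
    · rw [er'', sub2' (ι (β₁ • h + α₂ • Pv 0)) (ι (Pv 0)) (ι (Pv 1)) α₁ hBY hBZ]
  · intro y hy
    rw [Set.mem_insert_iff, Set.mem_singleton_iff] at hy
    rcases hy with rfl | rfl
    · rw [er', sub2 (ι (Pv 0)) (ι Pp) (ι (β₁ • h + α₂ • Pv 0)) hYX hBY.symm]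
    · rw [er', sub2 (ι (Pv 1)) (ι Pp) (ι (β₁ • h + α₂ • Pv 0)) hZX hBZ.symm]
  · have hr : r = (ι Pp ⊗ₜ[ℂ] ι (β₁ • h + α₂ • Pv 0)
        - ι (β₁ • h + α₂ • Pv 0) ⊗ₜ[ℂ] ι Pp)
        + α₁ • (ι (Pv 0) ⊗ₜ[ℂ] ι (Pv 1) - ι (Pv 1) ⊗ₜ[ℂ] ι (Pv 0)) := rfl
    refine cybe_abs (ι Pp) (ι (Pv 0)) (ι (Pv 1)) (ι (β₁ • h + α₂ • Pv 0)) β₁ α₁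
      hYX hZX hZY hBY hBZ hBX (E12 r) (E13 r) (E23 r) ?_ ?_ ?_
    · rw [hr]
      simp only [map_add, map_sub, map_smul, E12, Algebra.TensorProduct.map_tmul,
        AlgHom.id_apply, Algebra.TensorProduct.includeLeft_apply]
    · rw [hr]
      simp only [map_add, map_sub, map_smul, E13, Algebra.TensorProduct.map_tmul,
        AlgHom.id_apply, Algebra.TensorProduct.includeRight_apply]
    · rw [hr]
      simp only [map_add, map_sub, map_smul, E23,
        Algebra.TensorProduct.includeRight_apply]
end

section
/- The two-tensor r̃₁₂ = β₁ P_+ ∧ e_+ + P_− ∧ (αP_+ + α₁P₁ + α₂P₂) + ᾶ P_+ ∧ P₂ in the Poincaré algebra, with α₂ ≠ 0, does not satisfy the condition [[a, b]] = 0, i.e. the mixed CYBE terms between a = P_− ∧ (αP_+ + α₁P₁ + α₂P₂) + ᾶ P_+ ∧ P₂ and b = β₁ P_+ ∧ e_+ are nonzero; hence r̃₁₂ is not a classical r-matrix when α₂β₁ ≠ 0. -/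
/-
When the entries of `a = p ∧ q` commute with `r`, the mixed CYBE terms of `a` and `b = r ∧ s`
collapse to the alternating 3-tensor `[s, p] ∧ q ∧ r + p ∧ [s, q] ∧ r`. In the Poincaré algebra the
momenta commute and `e₊` acts on them by `[e₊, P₋] = 2 P₁`, `[e₊, P₊] = [e₊, P₂] = 0` and
`[e₊, P₁] = P₊`, so `[[a, b]] = 2 α₂ β₁ P₁ ∧ P₂ ∧ P₊`.

To detect this in `U(L)^{⊗3}` without a PBW basis, use the matrix coefficients `X ↦ g (ad X u)` of
the adjoint representation: with `u = N₃, N₁, N₂` and suitable coordinate functionals `g`, on momenta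
they read off `i` times the `P₀`, `P₁`, `P₂` coordinates, and turn the alternating tensor into a
`3 × 3` determinant equal to `-2 i α₂ β₁ ≠ 0`.
-/

open scoped TensorProduct

section CYBE

open TensorProduct Algebra.TensorProduct

attribute [local instance] LieRing.ofAssociativeRing

variable {R A : Type*} [CommRing R] [Ring A] [Algebra R A]

variable (R A) in
noncomputable def leg12 : A ⊗[R] A →ₐ[R] A ⊗[R] (A ⊗[R] A) :=
  Algebra.TensorProduct.map (AlgHom.id R A) includeLeft

variable (R A) in
noncomputable def leg13 : A ⊗[R] A →ₐ[R] A ⊗[R] (A ⊗[R] A) :=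
  Algebra.TensorProduct.map (AlgHom.id R A) includeRight

variable (R A) in
noncomputable def leg23 : A ⊗[R] A →ₐ[R] A ⊗[R] (A ⊗[R] A) := includeRight

noncomputable def cybeMixed (a b : A ⊗[R] A) : A ⊗[R] (A ⊗[R] A) :=
  ⁅leg12 R A a, leg13 R A b⁆ + ⁅leg12 R A b, leg13 R A a⁆ + ⁅leg12 R A a, leg23 R A b⁆ +
    ⁅leg12 R A b, leg23 R A a⁆ + ⁅leg13 R A a, leg23 R A b⁆ + ⁅leg13 R A b, leg23 R A a⁆

theorem cybeMixed_add_left (a a' b : A ⊗[R] A) :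
    cybeMixed (a + a') b = cybeMixed a b + cybeMixed a' b := by
  simp only [cybeMixed, map_add, add_lie, lie_add]; abel

theorem cybeMixed_smul_left (c : R) (a b : A ⊗[R] A) :
    cybeMixed (c • a) b = c • cybeMixed a b := by
  simp only [cybeMixed, map_smul, Ring.lie_def, smul_mul_assoc, mul_smul_comm, smul_sub, smul_add]

theorem cybeMixed_smul_right (c : R) (a b : A ⊗[R] A) :
    cybeMixed a (c • b) = c • cybeMixed a b := by
  simp only [cybeMixed, map_smul, Ring.lie_def, smul_mul_assoc, mul_smul_comm, smul_sub, smul_add]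

theorem lie_leg12_tmul_leg13_tmul (p q r s : A) :
    ⁅leg12 R A (p ⊗ₜ q), leg13 R A (r ⊗ₜ s)⁆ = ⁅p, r⁆ ⊗ₜ (q ⊗ₜ s) := by
  simp [leg12, leg13, Ring.lie_def, sub_tmul]

theorem lie_leg12_tmul_leg23_tmul (p q r s : A) :
    ⁅leg12 R A (p ⊗ₜ q), leg23 R A (r ⊗ₜ s)⁆ = p ⊗ₜ (⁅q, r⁆ ⊗ₜ s) := by
  simp [leg12, leg23, Ring.lie_def, sub_tmul, tmul_sub]

theorem lie_leg13_tmul_leg23_tmul (p q r s : A) :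
    ⁅leg13 R A (p ⊗ₜ q), leg23 R A (r ⊗ₜ s)⁆ = p ⊗ₜ (r ⊗ₜ ⁅q, s⁆) := by
  simp [leg13, leg23, Ring.lie_def, tmul_sub]

variable (R) in
noncomputable def wedge2 (p q : A) : A ⊗[R] A := p ⊗ₜ q - q ⊗ₜ p

variable (R) in
noncomputable def wedge3 (p q r : A) : A ⊗[R] (A ⊗[R] A) :=
  p ⊗ₜ (q ⊗ₜ r) - p ⊗ₜ (r ⊗ₜ q) - q ⊗ₜ (p ⊗ₜ r) + q ⊗ₜ (r ⊗ₜ p) + r ⊗ₜ (p ⊗ₜ q) - r ⊗ₜ (q ⊗ₜ p)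

theorem cybeMixed_wedge2_wedge2 {p q r s : A} (hpr : Commute p r) (hqr : Commute q r) :
    cybeMixed (wedge2 R p q) (wedge2 R r s) = wedge3 R ⁅s, p⁆ q r + wedge3 R p ⁅s, q⁆ r := by
  simp only [cybeMixed, wedge2, wedge3, map_sub, sub_lie, lie_sub, lie_leg12_tmul_leg13_tmul,
    lie_leg12_tmul_leg23_tmul, lie_leg13_tmul_leg23_tmul, hpr.lie_eq, hqr.lie_eq,
    hpr.symm.lie_eq, hqr.symm.lie_eq, ← lie_skew s p, ← lie_skew s q, zero_tmul, tmul_zero, neg_tmul, tmul_neg]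
  abel

variable (φ₁ φ₂ φ₃ : A →ₗ[R] R)

noncomputable def tensorDual3 : A ⊗[R] (A ⊗[R] A) →ₗ[R] R :=
  LinearMap.mul' R R ∘ₗ TensorProduct.map φ₁ (LinearMap.mul' R R ∘ₗ TensorProduct.map φ₂ φ₃)

theorem tensorDual3_tmul (p q r : A) :
    tensorDual3 φ₁ φ₂ φ₃ (p ⊗ₜ (q ⊗ₜ r)) = φ₁ p * (φ₂ q * φ₃ r) := by
  simp [tensorDual3]

theorem tensorDual3_wedge3 (p q r : A) :
    tensorDual3 φ₁ φ₂ φ₃ (wedge3 R p q r) =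
      !![φ₁ p, φ₁ q, φ₁ r; φ₂ p, φ₂ q, φ₂ r; φ₃ p, φ₃ q, φ₃ r].det := by
  simp [wedge3, tensorDual3_tmul, Matrix.det_fin_three]
  ring

end CYBE

section Envelope

variable {R L : Type*} [CommRing R] [LieRing L] [LieAlgebra R L]

open UniversalEnvelopingAlgebra

attribute [local instance] LieRing.ofAssociativeRing

noncomputable def adjointCoeff (g : Module.Dual R L) (u : L) : UniversalEnvelopingAlgebra R L →ₗ[R] R :=
  g ∘ₗ LinearMap.applyₗ u ∘ₗ (lift R (LieAlgebra.ad R L)).toLinearMap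

theorem adjointCoeff_ι (g : Module.Dual R L) (u x : L) :
    adjointCoeff g u (ι R x) = g ⁅x, u⁆ := by
  simp [adjointCoeff]

theorem lie_ι_ι (x y : L) : ⁅ι R x, ι R y⁆ = ι R ⁅x, y⁆ :=
  (LieHom.map_lie _ x y).symm

theorem commute_ι_of_lie_eq_zero {x y : L} (h : ⁅x, y⁆ = 0) : Commute (ι R x) (ι R y) := by
  rw [commute_iff_lie_eq, lie_ι_ι, h, map_zero]

end Envelope

theorem LinearIndependent.exists_biorthogonal {ι K V : Type*} [DecidableEq ι] [Field K]
    [AddCommGroup V] [Module K V] {v : ι → V} (hv : LinearIndependent K v) :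
    ∃ f : ι → Module.Dual K V, ∀ i j, f i (v j) = if i = j then 1 else 0 := by
  choose f hf using fun i => LinearMap.exists_extend (Finsupp.lapply i ∘ₗ hv.repr)
  refine ⟨f, fun i j => ?_⟩
  have hvj : v j ∈ Submodule.span K (Set.range v) := Submodule.subset_span ⟨j, rfl⟩
  have hj := LinearMap.congr_fun (hf i) ⟨v j, hvj⟩
  simp only [LinearMap.comp_apply, Submodule.subtype_apply, hv.repr_eq_single j ⟨v j, hvj⟩ rfl,
    Finsupp.lapply_apply, Finsupp.single_apply] at hj
  rw [hj]
  simp only [eq_comm]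

section Poincare

variable {L : Type*} [LieRing L] [LieAlgebra ℂ L] {M N Pv : Fin 3 → L} {P0 : L}

theorem lie_ePlus_P0 (hMP0 : ∀ i, ⁅M i, P0⁆ = 0) (hNP0 : ∀ i, ⁅N i, P0⁆ = -(Complex.I • Pv i)) :
    ⁅Complex.I • (N 0 + M 1), P0⁆ = Pv 0 := by
  simp [hNP0, hMP0, smul_smul]

theorem lie_ePlus_Pv (hMP : ∀ i j, ⁅M i, Pv j⁆ = Complex.I • ∑ k, (eps i j k : ℂ) • Pv k)
    (hNP : ∀ i j, ⁅N i, Pv j⁆ = if i = j then -(Complex.I • P0) else 0) :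
    ⁅Complex.I • (N 0 + M 1), Pv 0⁆ = P0 + Pv 2 ∧ ⁅Complex.I • (N 0 + M 1), Pv 1⁆ = 0 ∧
      ⁅Complex.I • (N 0 + M 1), Pv 2⁆ = -Pv 0 := by
  refine ⟨?_, ?_, ?_⟩ <;> simp [hNP, hMP, Fin.sum_univ_three, eps, smul_smul]

theorem lie_ePlus_momenta (hMP : ∀ i j, ⁅M i, Pv j⁆ = Complex.I • ∑ k, (eps i j k : ℂ) • Pv k)
    (hMP0 : ∀ i, ⁅M i, P0⁆ = 0)
    (hNP : ∀ i j, ⁅N i, Pv j⁆ = if i = j then -(Complex.I • P0) else 0)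
    (hNP0 : ∀ i, ⁅N i, P0⁆ = -(Complex.I • Pv i)) :
    ⁅Complex.I • (N 0 + M 1), P0 + Pv 2⁆ = 0 ∧
      ⁅Complex.I • (N 0 + M 1), P0 - Pv 2⁆ = (2 : ℂ) • Pv 0 ∧
      ⁅Complex.I • (N 0 + M 1), Pv 0⁆ = P0 + Pv 2 ∧ ⁅Complex.I • (N 0 + M 1), Pv 1⁆ = 0 := by
  obtain ⟨h0, h1, h2⟩ := lie_ePlus_Pv hMP hNP
  rw [lie_add, lie_sub, lie_ePlus_P0 hMP0 hNP0, h2, add_neg_cancel, sub_neg_eq_add, two_smul]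
  exact ⟨rfl, rfl, h0, h1⟩

theorem adjointCoeff_N_ι_P0 (hNP0 : ∀ i, ⁅N i, P0⁆ = -(Complex.I • Pv i)) (g : Module.Dual ℂ L)
    (j : Fin 3) : adjointCoeff g (N j) (UniversalEnvelopingAlgebra.ι ℂ P0) = Complex.I * g (Pv j) := by
  rw [adjointCoeff_ι, ← lie_skew, hNP0, neg_neg, map_smul, smul_eq_mul]

theorem adjointCoeff_N_ι_Pv (hNP : ∀ i j, ⁅N i, Pv j⁆ = if i = j then -(Complex.I • P0) else 0)
    (g : Module.Dual ℂ L) (j k : Fin 3) :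
    adjointCoeff g (N j) (UniversalEnvelopingAlgebra.ι ℂ (Pv k)) =
      if j = k then Complex.I * g P0 else 0 := by
  rw [adjointCoeff_ι, ← lie_skew, hNP]
  split_ifs <;> simp

end Poincare

theorem poincare_r12tilde_not_r_matrix_general {L : Type*} [LieRing L] [LieAlgebra ℂ L]
    (M N Pv : Fin 3 → L) (P0 : L)
    (hMP : ∀ i j, ⁅M i, Pv j⁆ = Complex.I • ∑ k, (eps i j k : ℂ) • Pv k)
    (hMP0 : ∀ i, ⁅M i, P0⁆ = 0)
    (hNP : ∀ i j, ⁅N i, Pv j⁆ = if i = j then -(Complex.I • P0) else 0)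
    (hNP0 : ∀ i, ⁅N i, P0⁆ = -(Complex.I • Pv i))
    (hPP : ∀ i j, ⁅Pv i, Pv j⁆ = 0)
    (hP0P : ∀ i, ⁅P0, Pv i⁆ = 0)
    -- the ten generators are linearly independent (so that we are in a genuine
    -- Poincaré algebra, not a degenerate quotient)
    (hli : LinearIndependent ℂ
      ![M 0, M 1, M 2, N 0, N 1, N 2, P0, Pv 0, Pv 1, Pv 2])
    (β₁ α α₁ α₂ α' : ℂ) (hα₂ : α₂ ≠ 0) (hβ₁ : β₁ ≠ 0) :
    let ep : L := Complex.I • (N 0 + M 1)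
    let Pp : L := P0 + Pv 2
    let Pm : L := P0 - Pv 2
    let A := UniversalEnvelopingAlgebra ℂ L
    let ι : L → A := fun z => UniversalEnvelopingAlgebra.ι ℂ z
    let w : L → L → A ⊗[ℂ] A := fun u v => ι u ⊗ₜ[ℂ] ι v - ι v ⊗ₜ[ℂ] ι u
    -- a = P₋ ∧ (αP₊ + α₁P₁ + α₂P₂) + ᾶ P₊ ∧ P₂,  b = β₁ P₊ ∧ e₊
    let a : A ⊗[ℂ] A := w Pm (α • Pp + α₁ • Pv 0 + α₂ • Pv 1) + α' • w Pp (Pv 1)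
    let b : A ⊗[ℂ] A := β₁ • w Pp ep
    let E12 : (A ⊗[ℂ] A) →ₐ[ℂ] A ⊗[ℂ] (A ⊗[ℂ] A) :=
      Algebra.TensorProduct.map (AlgHom.id ℂ A) Algebra.TensorProduct.includeLeft
    let E13 : (A ⊗[ℂ] A) →ₐ[ℂ] A ⊗[ℂ] (A ⊗[ℂ] A) :=
      Algebra.TensorProduct.map (AlgHom.id ℂ A) Algebra.TensorProduct.includeRight
    let E23 : (A ⊗[ℂ] A) →ₐ[ℂ] A ⊗[ℂ] (A ⊗[ℂ] A) := Algebra.TensorProduct.includeRight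
    -- the mixed Schouten terms [[a, b]] do not vanish
    ⁅E12 a, E13 b⁆ + ⁅E12 b, E13 a⁆ + ⁅E12 a, E23 b⁆ + ⁅E12 b, E23 a⁆ +
      ⁅E13 a, E23 b⁆ + ⁅E13 b, E23 a⁆ ≠ 0 := by
  intro ep Pp Pm A ιA w a b E12 E13 E23
  set X := α • Pp + α₁ • Pv 0 + α₂ • Pv 1
  open UniversalEnvelopingAlgebra in
  change cybeMixed (wedge2 ℂ (ι ℂ Pm) (ι ℂ X) + α' • wedge2 ℂ (ι ℂ Pp) (ι ℂ (Pv 1)))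
    (β₁ • wedge2 ℂ (ι ℂ Pp) (ι ℂ ep)) ≠ 0
  have hP0Pp : ⁅P0, Pp⁆ = 0 := by simp [Pp, hP0P]
  have hPvPp : ∀ i, ⁅Pv i, Pp⁆ = 0 := fun i => by
    rw [lie_add, hPP, ← lie_skew, hP0P, neg_zero, add_zero]
  have hPmPp : ⁅Pm, Pp⁆ = 0 := by simp only [Pm, sub_lie, hP0Pp, hPvPp, sub_zero]
  have hXPp : ⁅X, Pp⁆ = 0 := by
    simp only [X, add_lie, smul_lie, hPvPp, lie_self, smul_zero, add_zero]
  obtain ⟨hep_Pp, hep_Pm, hep0, hep1⟩ :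
      ⁅ep, Pp⁆ = 0 ∧ ⁅ep, Pm⁆ = (2 : ℂ) • Pv 0 ∧ ⁅ep, Pv 0⁆ = Pp ∧ ⁅ep, Pv 1⁆ = 0 :=
    lie_ePlus_momenta hMP hMP0 hNP hNP0
  have hep_X : ⁅ep, X⁆ = α₁ • Pp := by simp [X, hep_Pp, hep0, hep1]
  rw [cybeMixed_add_left, cybeMixed_smul_left, cybeMixed_smul_right, cybeMixed_smul_right,
    cybeMixed_wedge2_wedge2 (commute_ι_of_lie_eq_zero hPmPp) (commute_ι_of_lie_eq_zero hXPp),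
    cybeMixed_wedge2_wedge2 (Commute.refl _) (commute_ι_of_lie_eq_zero (hPvPp 1)),
    lie_ι_ι, lie_ι_ι, lie_ι_ι, lie_ι_ι, hep_Pm, hep_X, hep_Pp, hep1]
  obtain ⟨f, hf⟩ := hli.exists_biorthogonal
  have hf6 : f 6 P0 = 1 ∧ f 6 (Pv 0) = 0 ∧ f 6 (Pv 1) = 0 ∧ f 6 (Pv 2) = 0 :=
    ⟨by simpa using hf 6 6, by simpa using hf 6 7, by simpa using hf 6 8, by simpa using hf 6 9⟩
  have hf9 : f 9 P0 = 0 ∧ f 9 (Pv 2) = 1 := ⟨by simpa using hf 9 6, by simpa using hf 9 9⟩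
  intro h
  have hval := congrArg (tensorDual3 (adjointCoeff (f 9) (N 2)) (adjointCoeff (f 6) (N 0))
    (adjointCoeff (f 6) (N 1))) h
  simp only [X, Pp, Pm, map_add, map_sub, map_smul, map_zero, adjointCoeff_N_ι_P0 hNP0,
    adjointCoeff_N_ι_Pv hNP, hf6, hf9, tensorDual3_wedge3, Matrix.det_fin_three] at hval
  simp [hα₂, hβ₁] at hval

/-- for `r̃₁₂ = β₁ P₊ ∧ e₊ + P₋ ∧ (αP₊ + α₁P₁ + α₂P₂) + ᾶ P₊ ∧ P₂` with
`α₂β₁ ≠ 0`, the mixed Schouten terms `[[a, b]]` between the momentum part `a` and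
`b = β₁ P₊ ∧ e₊` do not vanish, so `r̃₁₂` is not a classical r-matrix. -/
theorem poincare_r12tilde_not_r_matrix {L : Type*} [LieRing L] [LieAlgebra ℂ L]
    (M N Pv : Fin 3 → L) (P0 : L)
    (hMM : ∀ i j, ⁅M i, M j⁆ = Complex.I • ∑ k, (eps i j k : ℂ) • M k)
    (hMN : ∀ i j, ⁅M i, N j⁆ = Complex.I • ∑ k, (eps i j k : ℂ) • N k)
    (hNN : ∀ i j, ⁅N i, N j⁆ = -(Complex.I • ∑ k, (eps i j k : ℂ) • M k))
    (hMP : ∀ i j, ⁅M i, Pv j⁆ = Complex.I • ∑ k, (eps i j k : ℂ) • Pv k)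
    (hMP0 : ∀ i, ⁅M i, P0⁆ = 0)
    (hNP : ∀ i j, ⁅N i, Pv j⁆ = if i = j then -(Complex.I • P0) else 0)
    (hNP0 : ∀ i, ⁅N i, P0⁆ = -(Complex.I • Pv i))
    (hPP : ∀ i j, ⁅Pv i, Pv j⁆ = 0)
    (hP0P : ∀ i, ⁅P0, Pv i⁆ = 0)
    -- the ten generators are linearly independent (so that we are in a genuine
    -- Poincaré algebra, not a degenerate quotient)
    (hli : LinearIndependent ℂ
      ![M 0, M 1, M 2, N 0, N 1, N 2, P0, Pv 0, Pv 1, Pv 2])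
    (β₁ α α₁ α₂ α' : ℂ) (hα₂ : α₂ ≠ 0) (hβ₁ : β₁ ≠ 0) :
    let ep : L := Complex.I • (N 0 + M 1)
    let Pp : L := P0 + Pv 2
    let Pm : L := P0 - Pv 2
    let A := UniversalEnvelopingAlgebra ℂ L
    let ι : L → A := fun z => UniversalEnvelopingAlgebra.ι ℂ z
    let w : L → L → A ⊗[ℂ] A := fun u v => ι u ⊗ₜ[ℂ] ι v - ι v ⊗ₜ[ℂ] ι u
    -- a = P₋ ∧ (αP₊ + α₁P₁ + α₂P₂) + ᾶ P₊ ∧ P₂,  b = β₁ P₊ ∧ e₊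
    let a : A ⊗[ℂ] A := w Pm (α • Pp + α₁ • Pv 0 + α₂ • Pv 1) + α' • w Pp (Pv 1)
    let b : A ⊗[ℂ] A := β₁ • w Pp ep
    let E12 : (A ⊗[ℂ] A) →ₐ[ℂ] A ⊗[ℂ] (A ⊗[ℂ] A) :=
      Algebra.TensorProduct.map (AlgHom.id ℂ A) Algebra.TensorProduct.includeLeft
    let E13 : (A ⊗[ℂ] A) →ₐ[ℂ] A ⊗[ℂ] (A ⊗[ℂ] A) :=
      Algebra.TensorProduct.map (AlgHom.id ℂ A) Algebra.TensorProduct.includeRight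
    let E23 : (A ⊗[ℂ] A) →ₐ[ℂ] A ⊗[ℂ] (A ⊗[ℂ] A) := Algebra.TensorProduct.includeRight
    -- the mixed Schouten terms [[a, b]] do not vanish
    ⁅E12 a, E13 b⁆ + ⁅E12 b, E13 a⁆ + ⁅E12 a, E23 b⁆ + ⁅E12 b, E23 a⁆ +
      ⁅E13 a, E23 b⁆ + ⁅E13 b, E23 a⁆ ≠ 0 :=
  poincare_r12tilde_not_r_matrix_general M N Pv P0 hMP hMP0 hNP hNP0 hPP hP0P hli β₁ α α₁ α₂ α' hα₂
    hβ₁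
end
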